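/- Let 𝔐 be a class of preference models and ★ a dynamic operator closed over 𝔐. The schemata (1) [★φ][<]ξ → (¬φ → A(φ → [★φ]ξ)) and (2) φ → [★φ][≤]φ are valid in ⟨𝔐, ★⟩ for all φ ∈ L_0 and ξ ∈ L_≤(★) if and only if ★ is 𝔐-Rec-compliant. -/

import Mathlib

inductive PForm (P : Type) : Type
  | atom : P → PForm P
  | neg  : PForm P → PForm P
  | and  : PForm P → PForm P → PForm P

inductive DForm (P : Type) : Type
  | atom  : P → DForm P
  | neg   : DForm P → DForm P
  | and   : DForm P → DForm P → DForm P
  | all   : DForm P → DForm P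
  | boxLe : DForm P → DForm P
  | boxLt : DForm P → DForm P
  | dyn   : PForm P → DForm P → DForm P

structure PrefModel (P : Type) where
  W : Type
  le : W → W → Prop
  refl : ∀ w, le w w
  trans : ∀ w₁ w₂ w₃, le w₁ w₂ → le w₂ w₃ → le w₁ w₃
  wf : WellFounded (fun w w' => le w w' ∧ ¬ le w' w)
  val : P → Set W

namespace PrefModel
variable {P : Type}
def lt (M : PrefModel P) (w w' : M.W) : Prop := M.le w w' ∧ ¬ M.le w' w
def Min (M : PrefModel P) (S : Set M.W) : Set M.W :=
  {w | w ∈ S ∧ ¬ ∃ w' ∈ S, M.le w' w ∧ ¬ M.le w w'}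
end PrefModel

def psat {P : Type} (M : PrefModel P) : PForm P → M.W → Prop
  | .atom p, w => w ∈ M.val p
  | .neg φ, w => ¬ psat M φ w
  | .and φ ψ, w => psat M φ w ∧ psat M ψ w

def pext {P : Type} (M : PrefModel P) (φ : PForm P) : Set M.W := {w | psat M φ w}

structure DynOp (P : Type) where
  rel : (M : PrefModel P) → PForm P → M.W → M.W → Prop
  refl : ∀ M φ w, rel M φ w w
  trans : ∀ M φ w₁ w₂ w₃, rel M φ w₁ w₂ → rel M φ w₂ w₃ → rel M φ w₁ w₃
  wf : ∀ M φ, WellFounded (fun w w' => rel M φ w w' ∧ ¬ rel M φ w' w)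

def DynOp.apply {P : Type} (s : DynOp P) (M : PrefModel P) (φ : PForm P) : PrefModel P where
  W := M.W
  le := s.rel M φ
  refl := s.refl M φ
  trans := s.trans M φ
  wf := s.wf M φ
  val := M.val

def DynOp.srel {P : Type} (s : DynOp P) (M : PrefModel P) (φ : PForm P) (w w' : M.W) : Prop :=
  s.rel M φ w w' ∧ ¬ s.rel M φ w' w

def PForm.toD {P : Type} : PForm P → DForm P
  | .atom p => .atom p
  | .neg φ => .neg φ.toD
  | .and φ ψ => .and φ.toD ψ.toD

namespace DForm
variable {P : Type}
def imp (ξ ψ : DForm P) : DForm P := .neg (.and ξ (.neg ψ))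
def iff (ξ ψ : DForm P) : DForm P := .and (imp ξ ψ) (imp ψ ξ)
def or (ξ ψ : DForm P) : DForm P := .neg (.and (.neg ξ) (.neg ψ))
def exi (ξ : DForm P) : DForm P := .neg (.all (.neg ξ))
def diaLt (ξ : DForm P) : DForm P := .neg (.boxLt (.neg ξ))
def mu (ξ : DForm P) : DForm P := .and ξ (.neg (diaLt ξ))
def bel (ψ χ : DForm P) : DForm P := .all (imp (mu χ) ψ)
end DForm

def dsat {P : Type} (s : DynOp P) : DForm P → (M : PrefModel P) → M.W → Prop
  | .atom p, M, w => w ∈ M.val p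
  | .neg ξ, M, w => ¬ dsat s ξ M w
  | .and ξ₁ ξ₂, M, w => dsat s ξ₁ M w ∧ dsat s ξ₂ M w
  | .all ξ, M, _ => ∀ w', dsat s ξ M w'
  | .boxLe ξ, M, w => ∀ w', M.le w' w → dsat s ξ M w'
  | .boxLt ξ, M, w => ∀ w', M.lt w' w → dsat s ξ M w'
  | .dyn φ ξ, M, w => dsat s ξ (s.apply M φ) w

def ClosedOver {P : Type} (s : DynOp P) (𝔐 : Set (PrefModel P)) : Prop :=
  ∀ M ∈ 𝔐, ∀ φ : PForm P, s.apply M φ ∈ 𝔐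

/-- `★` is `𝔐`-Rec-compliant. -/
def RecCompliant {P : Type} (s : DynOp P) (𝔐 : Set (PrefModel P)) : Prop :=
  ∀ M ∈ 𝔐, ∀ (φ : PForm P) (w w' : M.W),
    psat M φ w → ¬ psat M φ w' →
      ¬ s.rel M φ w' w ∧
      ∀ ξ : DForm P, dsat s (.dyn φ ξ) M w →
        ∃ w'' : M.W, psat M φ w'' ∧ dsat s (.dyn φ ξ) M w'' ∧ s.rel M φ w'' w'

/-
Schema (2), φ → [★φ][≤]φ, says exactly that the update never ranks a ¬φ-world at or below a
φ-world. Schema (1) for ¬ξ says: if some φ-world satisfies [★φ]ξ, then every ¬φ-world has a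
strictly better [★φ]ξ-world. So a <-minimal [★φ]ξ-world below w' (well-foundedness) is a
φ-world, the witness Rec-compliance asks for. Conversely, with the first half of Rec-compliance
that witness is strictly better than the ¬φ-world w, which gives schema (1).
-/
theorem WellFounded.exists_mem_inter_rel {α : Type*} {r : α → α → Prop}
    (htrans : ∀ a b c, r a b → r b c → r a c) (hwf : WellFounded fun a b => r a b ∧ ¬ r b a)
    {S T : Set α} (hS : ∀ v ∈ S, v ∉ T → ∃ u ∈ S, r u v ∧ ¬ r v u)
    {u v : α} (hu : u ∈ S) (huv : r u v) : ∃ m ∈ S, m ∈ T ∧ r m v := by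
  obtain ⟨m, ⟨hmS, hmv⟩, hmin⟩ := hwf.has_min {x | x ∈ S ∧ r x v} ⟨u, hu, huv⟩
  refine ⟨m, hmS, by_contra fun hmT => ?_, hmv⟩
  obtain ⟨x, hxS, hxm, hmx⟩ := hS m hmS hmT
  exact hmin x ⟨hxS, htrans x m v hxm hmv⟩ ⟨hxm, hmx⟩

namespace DForm

variable {P : Type}

def schemaLt (φ : PForm P) (ξ : DForm P) : DForm P :=
  (DForm.dyn φ (.boxLt ξ)).imp ((DForm.neg φ.toD).imp (.all (φ.toD.imp (.dyn φ ξ))))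

def schemaLe (φ : PForm P) : DForm P :=
  φ.toD.imp (.dyn φ (.boxLe φ.toD))

end DForm

section Semantics

variable {P : Type} (s : DynOp P) (M : PrefModel P) (φ : PForm P)

theorem psat_apply (ψ : PForm P) (w : M.W) : psat (s.apply M ψ) φ w ↔ psat M φ w := by
  induction φ with
  | atom p => exact Iff.rfl
  | neg φ ih => exact not_congr ih
  | and φ χ ih₁ ih₂ => exact and_congr ih₁ ih₂

theorem dsat_toD (w : M.W) : dsat s φ.toD M w ↔ psat M φ w := by
  induction φ with
  | atom p => exact Iff.rfl
  | neg φ ih => exact not_congr ih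
  | and φ χ ih₁ ih₂ => exact and_congr ih₁ ih₂

theorem dsat_schemaLe_iff (w : M.W) :
    dsat s (DForm.schemaLe φ) M w ↔ (psat M φ w → ∀ u, s.rel M φ u w → psat M φ u) := by
  have hφ : ∀ (N : PrefModel P) v, dsat s φ.toD N v ↔ psat N φ v := fun N => dsat_toD s N φ
  simp only [DForm.schemaLe, DForm.imp, dsat, hφ, not_and, not_not]
  exact imp_congr_right fun _ => forall_congr' fun u =>
    imp_congr_right fun _ => psat_apply s M φ φ u

theorem dsat_schemaLt_iff (ξ : DForm P) (w : M.W) :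
    dsat s (DForm.schemaLt φ ξ) M w ↔
      ((∀ u, s.srel M φ u w → dsat s ξ (s.apply M φ) u) →
        ¬ psat M φ w → ∀ u, psat M φ u → dsat s ξ (s.apply M φ) u) := by
  have hφ : ∀ (N : PrefModel P) v, dsat s φ.toD N v ↔ psat N φ v := fun N => dsat_toD s N φ
  simp only [DForm.schemaLt, DForm.imp, dsat, hφ, not_and, not_not]
  rfl

variable {s M φ}

theorem exists_srel_of_schemaLt {ξ : DForm P}
    (hschema : ∀ w, dsat s (DForm.schemaLt φ (.neg ξ)) M w)
    {u v : M.W} (hu : psat M φ u) (huξ : dsat s ξ (s.apply M φ) u) (hv : ¬ psat M φ v) :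
    ∃ x, dsat s ξ (s.apply M φ) x ∧ s.srel M φ x v := by
  by_contra! hnone
  exact (dsat_schemaLt_iff s M φ _ v).1 (hschema v) (fun x hx hxξ => hnone x hxξ hx)
    hv u hu huξ

theorem exists_psat_rel_of_schemaLt {ξ : DForm P}
    (hschema : ∀ w, dsat s (DForm.schemaLt φ (.neg ξ)) M w)
    {u v : M.W} (hu : psat M φ u) (huξ : dsat s ξ (s.apply M φ) u) (hv : ¬ psat M φ v) :
    ∃ m, psat M φ m ∧ dsat s ξ (s.apply M φ) m ∧ s.rel M φ m v := by
  obtain ⟨x, hxξ, hxv, -⟩ := exists_srel_of_schemaLt hschema hu huξ hv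
  obtain ⟨m, hmξ, hmφ, hmv⟩ := WellFounded.exists_mem_inter_rel (s.trans M φ) (s.wf M φ)
    (S := {x | dsat s ξ (s.apply M φ) x}) (T := {x | psat M φ x})
    (fun y _ hy => exists_srel_of_schemaLt hschema hu huξ hy) hxξ hxv
  exact ⟨m, hmφ, hmξ, hmv⟩

theorem dsat_schemaLt_of_rec (ξ : DForm P)
    (hnot : ∀ w w', psat M φ w → ¬ psat M φ w' → ¬ s.rel M φ w' w)
    (hwit : ∀ w w', psat M φ w → ¬ psat M φ w' → dsat s (.dyn φ (.neg ξ)) M w →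
      ∃ w'', psat M φ w'' ∧ dsat s (.dyn φ (.neg ξ)) M w'' ∧ s.rel M φ w'' w') (w : M.W) :
    dsat s (DForm.schemaLt φ ξ) M w := by
  refine (dsat_schemaLt_iff s M φ ξ w).2 fun hbelow hw u hu => by_contra fun huξ => ?_
  obtain ⟨x, hx, hxξ, hxw⟩ := hwit u w hu hw huξ
  exact hxξ (hbelow x ⟨hxw, hnot x w hx hw⟩)

end Semantics

theorem rec_compliance_characterisation_general {P : Type}
    (𝔐 : Set (PrefModel P)) (s : DynOp P) :
    (∀ (φ : PForm P) (ξ : DForm P), ∀ M ∈ 𝔐, ∀ w : M.W,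
      dsat s ((DForm.dyn φ (.boxLt ξ)).imp
        ((DForm.neg φ.toD).imp (.all (φ.toD.imp (.dyn φ ξ))))) M w ∧
      dsat s (φ.toD.imp (.dyn φ (.boxLe φ.toD))) M w) ↔
      RecCompliant s 𝔐 := by
  constructor
  · intro hvalid M hM φ w w' hw hw'
    have hschemaLe := (dsat_schemaLe_iff s M φ w).1 (hvalid φ φ.toD M hM w).2
    refine ⟨fun hrel => hw' (hschemaLe hw w' hrel), fun ξ hξ => ?_⟩
    exact exists_psat_rel_of_schemaLt (fun v => (hvalid φ (.neg ξ) M hM v).1) hw hξ hw'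
  · intro hrec φ ξ M hM w
    have hnot w w' hw hw' := (hrec M hM φ w w' hw hw').1
    have hwit w w' hw hw' := (hrec M hM φ w w' hw hw').2 (.neg ξ)
    refine ⟨dsat_schemaLt_of_rec ξ hnot hwit w, (dsat_schemaLe_iff s M φ w).2 ?_⟩
    exact fun hw u hu => by_contra fun hu' => hnot w u hw hu' hu

theorem rec_compliance_characterisation {P : Type}
    (𝔐 : Set (PrefModel P)) (s : DynOp P) (hclosed : ClosedOver s 𝔐) :
    (∀ (φ : PForm P) (ξ : DForm P), ∀ M ∈ 𝔐, ∀ w : M.W,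
      dsat s ((DForm.dyn φ (.boxLt ξ)).imp
        ((DForm.neg φ.toD).imp (.all (φ.toD.imp (.dyn φ ξ))))) M w ∧
      dsat s (φ.toD.imp (.dyn φ (.boxLe φ.toD))) M w) ↔
      RecCompliant s 𝔐 :=
  rec_compliance_characterisation_general 𝔐 s
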